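/- arXiv:math/0404306 — 8 statements merged into one kernel-verified Lean document; each statement's English description precedes it below -/
import Mathlib

section
/- Fix x ∈ C, t ∈ [0,1], and 0 ≤ u₁ ≤ u₂ ≤ t. If 1 − α_x(1−t+u₁) < (T(t)x)(u₂) − u₂ + u₁, then (T(t)x)(u₁) = x(0) − t + u₁ and (T(t)x)(u₂) = x(0) − t + u₂. -/
open Set

noncomputable section

/-- `Ω = {−1} ∪ [0,∞)`. -/
def Omega : Set ℝ := {-1} ∪ Set.Ici 0

/-- Membership in the set `C`: `x` takes values in `[0,1]` on `Ω`
and is 1-Lipschitz on `[0,∞)`. -/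
def memC (x : ℝ → ℝ) : Prop :=
  (∀ u ∈ Omega, x u ∈ Set.Icc (0:ℝ) 1) ∧
  ∀ u₁ ∈ Set.Ici (0:ℝ), ∀ u₂ ∈ Set.Ici (0:ℝ), |x u₁ - x u₂| ≤ |u₁ - u₂|

/-- `α_x(r) = sup { x s : s ∈ {−1} ∪ [r,∞) }`. -/
def alphaF (x : ℝ → ℝ) (r : ℝ) : ℝ := sSup (x '' ({-1} ∪ Set.Ici r))

/-- The semigroup map `T(t)` for `t ∈ [0,1]`:
`(T(t)x)(−1) = x(−1)`, `(T(t)x)(u) = x(u−t)` for `u ≥ t`, and for `0 ≤ u ≤ t`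
the three-case definition via `α_x`. -/
def T (t : ℝ) (x : ℝ → ℝ) : ℝ → ℝ := fun u =>
  if u = -1 then x (-1)
  else if t ≤ u then x (u - t)
  else if 1 - alphaF x (1 - t + u) ≤ x 0 - t + u then x 0 - t + u
  else if x 0 + t - u ≤ 1 - alphaF x (1 - t + u) then x 0 + t - u
  else 1 - alphaF x (1 - t + u)

/-- The supremum distance over `Ω`. -/
def supDist (x y : ℝ → ℝ) : ℝ := sSup ((fun u => |x u - y u|) '' Omega)

lemma alpha_bdd (x : ℝ → ℝ) (hx : memC x) (r : ℝ) (hr : 0 ≤ r) :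
    BddAbove (x '' ({-1} ∪ Set.Ici r)) := by
  refine ⟨1, ?_⟩
  rintro y ⟨s, hs, rfl⟩
  have hs' : s ∈ Omega := by
    rcases hs with h | h
    · exact Or.inl h
    · exact Or.inr (le_trans hr h)
  exact (hx.1 s hs').2

lemma alpha_lip (x : ℝ → ℝ) (hx : memC x) (r₁ r₂ : ℝ) (h0 : 0 ≤ r₁) (h : r₁ ≤ r₂) :
    alphaF x r₁ ≤ alphaF x r₂ + (r₂ - r₁) := by
  have h0' : (0:ℝ) ≤ r₂ := le_trans h0 h
  have hbdd := alpha_bdd x hx r₂ h0'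
  refine csSup_le ⟨x (-1), ⟨-1, Or.inl rfl, rfl⟩⟩ ?_
  rintro y ⟨s, hs, rfl⟩
  rcases hs with h1 | h1
  · have hxs : x s ≤ alphaF x r₂ := le_csSup hbdd ⟨s, Or.inl h1, rfl⟩
    linarith
  · by_cases hsr : r₂ ≤ s
    · have hxs : x s ≤ alphaF x r₂ := le_csSup hbdd ⟨s, Or.inr hsr, rfl⟩
      linarith
    · push_neg at hsr
      have hlip := hx.2 s (le_trans h0 h1) r₂ h0'
      have hx2 : x r₂ ≤ alphaF x r₂ := le_csSup hbdd ⟨r₂, Or.inr (Set.mem_Ici.mpr le_rfl), rfl⟩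
      have habs : |s - r₂| = r₂ - s := by
        rw [abs_of_nonpos (by linarith : s - r₂ ≤ 0)]; ring
      rw [habs] at hlip
      have hle := le_trans (le_abs_self _) hlip
      have h1' : r₁ ≤ s := h1
      linarith

/-- Lemma 2(i): if `1 − α_x(1−t+u₁) < (T(t)x)(u₂) − u₂ + u₁`
then `(T(t)x)(u₁) = x(0)−t+u₁` and `(T(t)x)(u₂) = x(0)−t+u₂`. -/
theorem stmt_3 (x : ℝ → ℝ) (hx : memC x) (t : ℝ) (ht : t ∈ Set.Icc (0:ℝ) 1)
    (u₁ u₂ : ℝ) (h0 : 0 ≤ u₁) (h12 : u₁ ≤ u₂) (h2t : u₂ ≤ t)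
    (h : 1 - alphaF x (1 - t + u₁) < T t x u₂ - u₂ + u₁) :
    T t x u₁ = x 0 - t + u₁ ∧ T t x u₂ = x 0 - t + u₂ := by
  obtain ⟨ht0, ht1⟩ := ht
  have h0₂ : (0:ℝ) ≤ u₂ := le_trans h0 h12
  have hr1 : (0:ℝ) ≤ 1 - t + u₁ := by linarith
  have hr2 : (0:ℝ) ≤ 1 - t + u₂ := by linarith
  have hne₁ : u₁ ≠ -1 := by intro hh; linarith [hh ▸ h0]
  have hne₂ : u₂ ≠ -1 := by intro hh; linarith [hh ▸ h0₂]
  have hlip := alpha_lip x hx (1 - t + u₁) (1 - t + u₂) hr1 (by linarith)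
  -- hlip : alphaF x (1-t+u₁) ≤ alphaF x (1-t+u₂) + u₂ - u₁ (after arithmetic)
  have key : 1 - alphaF x (1 - t + u₁) < x 0 - t + u₁ := by
    by_cases h2 : t ≤ u₂
    · have hu2 : u₂ = t := le_antisymm h2t h2
      rw [T, if_neg hne₂, if_pos h2, hu2, sub_self] at h
      linarith
    · rw [T, if_neg hne₂, if_neg h2] at h
      by_cases hb1 : 1 - alphaF x (1 - t + u₂) ≤ x 0 - t + u₂
      · rw [if_pos hb1] at h; linarith
      · rw [if_neg hb1] at h
        by_cases hb2 : x 0 + t - u₂ ≤ 1 - alphaF x (1 - t + u₂)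
        · rw [if_pos hb2] at h; linarith
        · rw [if_neg hb2] at h; linarith
  constructor
  · by_cases h1 : t ≤ u₁
    · have hu1 : u₁ = t := le_antisymm (le_trans h12 h2t) h1
      rw [T, if_neg hne₁, if_pos h1, hu1]
      ring_nf
    · rw [T, if_neg hne₁, if_neg h1, if_pos (le_of_lt key)]
  · by_cases h2 : t ≤ u₂
    · have hu2 : u₂ = t := le_antisymm h2t h2
      rw [T, if_neg hne₂, if_pos h2, hu2]
      ring_nf
    · have hb1 : 1 - alphaF x (1 - t + u₂) ≤ x 0 - t + u₂ := by linarith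
      rw [T, if_neg hne₂, if_neg h2, if_pos hb1]
end
end

section
/- Fix x ∈ C, t ∈ [0,1], and 0 ≤ u₁ ≤ u₂ ≤ t. If 1 − α_x(1−t+u₁) > (T(t)x)(u₂) + u₂ − u₁, then (T(t)x)(u₁) = x(0) + t − u₁ and (T(t)x)(u₂) = x(0) + t − u₂. -/
open Set

noncomputable section

/- On `[0, t]` the function `T t x` is `1 - α_x(1 - t + u)` clamped to the window
`[x 0 - (t - u), x 0 + (t - u)]`. If it were not pinned at the top of the window at `u₂`, it
would be at least `1 - α_x(1 - t + u₂) ≥ 1 - α_x(1 - t + u₁)`, contradicting the hypothesis;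
so it is pinned at `u₂`, and the hypothesis then says that `1 - α_x(1 - t + u₁)` lies above
the window at `u₁` as well. -/

lemma antitoneOn_alphaF {x : ℝ → ℝ} (hx : memC x) : AntitoneOn (alphaF x) (Ici 0) := by
  intro r₁ hr₁ r₂ _ hr
  apply csSup_le_csSup
  · refine ⟨1, ?_⟩
    rintro _ ⟨s, hs, rfl⟩
    refine (hx.1 s ?_).2
    rcases hs with hs | hs
    · exact Or.inl hs
    · exact Or.inr (mem_Ici.2 (le_trans (mem_Ici.1 hr₁) (mem_Ici.1 hs)))
  · exact ⟨x (-1), mem_image_of_mem x (Or.inl rfl)⟩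
  · exact image_mono (union_subset_union_right _ (Ici_subset_Ici.2 hr))

lemma T_eq_max_min (x : ℝ → ℝ) {t u : ℝ} (hu : 0 ≤ u) (hut : u ≤ t) :
    T t x u = max (x 0 - (t - u)) (min (x 0 + (t - u)) (1 - alphaF x (1 - t + u))) := by
  have hu' : u ≠ -1 := by linarith
  rcases hut.eq_or_lt with rfl | hut
  · simp [T, hu']
  simp only [T, hu', hut.not_ge, if_false]
  split_ifs with hlo hhi
  · rw [min_eq_right (by linarith), max_eq_left (by linarith)]; ring
  · rw [min_eq_left (by linarith), max_eq_right (by linarith)]; ring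
  · rw [min_eq_right (by linarith), max_eq_right (by linarith)]

lemma min_le_T (x : ℝ → ℝ) {t u : ℝ} (hu : 0 ≤ u) (hut : u ≤ t) :
    min (x 0 + (t - u)) (1 - alphaF x (1 - t + u)) ≤ T t x u :=
  T_eq_max_min x hu hut ▸ le_max_right _ _

lemma T_eq_of_le_one_sub_alphaF (x : ℝ → ℝ) {t u : ℝ} (hu : 0 ≤ u) (hut : u ≤ t)
    (h : x 0 + (t - u) ≤ 1 - alphaF x (1 - t + u)) : T t x u = x 0 + t - u := by
  rw [T_eq_max_min x hu hut, min_eq_left h, max_eq_right (by linarith)]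
  ring

/-- Lemma 2(ii): if `1 − α_x(1−t+u₁) > (T(t)x)(u₂) + u₂ − u₁`
then `(T(t)x)(u₁) = x(0)+t−u₁` and `(T(t)x)(u₂) = x(0)+t−u₂`. -/
theorem stmt_4 (x : ℝ → ℝ) (hx : memC x) (t : ℝ) (ht : t ∈ Set.Icc (0:ℝ) 1)
    (u₁ u₂ : ℝ) (h0 : 0 ≤ u₁) (h12 : u₁ ≤ u₂) (h2t : u₂ ≤ t)
    (h : 1 - alphaF x (1 - t + u₁) > T t x u₂ + u₂ - u₁) :
    T t x u₁ = x 0 + t - u₁ ∧ T t x u₂ = x 0 + t - u₂ := by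
  have hα : alphaF x (1 - t + u₂) ≤ alphaF x (1 - t + u₁) :=
    antitoneOn_alphaF hx (by simp only [mem_Ici]; linarith [ht.2])
      (by simp only [mem_Ici]; linarith [ht.2]) (by linarith)
  have h₂ : x 0 + (t - u₂) ≤ 1 - alphaF x (1 - t + u₂) := by
    by_contra! hlt
    have hle := min_le_T x (h0.trans h12) h2t
    rw [min_eq_right hlt.le] at hle
    linarith
  have hT₂ := T_eq_of_le_one_sub_alphaF x (h0.trans h12) h2t h₂
  refine ⟨T_eq_of_le_one_sub_alphaF x h0 (h12.trans h2t) ?_, hT₂⟩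
  linarith
end
end

section
/- Fix x ∈ C, t ∈ [0,1], and 0 ≤ u₁ ≤ u₂ ≤ t. If |1 − α_x(1−t+u₁) − (T(t)x)(u₂)| ≤ u₂ − u₁, then (T(t)x)(u₁) = 1 − α_x(1−t+u₁). -/
open Set

noncomputable section

/-- Lemma 2(iii): if `|1 − α_x(1−t+u₁) − (T(t)x)(u₂)| ≤ u₂ − u₁`
then `(T(t)x)(u₁) = 1 − α_x(1−t+u₁)`. -/
theorem stmt_5 (x : ℝ → ℝ) (hx : memC x) (t : ℝ) (ht : t ∈ Set.Icc (0:ℝ) 1)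
    (u₁ u₂ : ℝ) (h0 : 0 ≤ u₁) (h12 : u₁ ≤ u₂) (h2t : u₂ ≤ t)
    (h : |1 - alphaF x (1 - t + u₁) - T t x u₂| ≤ u₂ - u₁) :
    T t x u₁ = 1 - alphaF x (1 - t + u₁) := by
  have hu1 : u₁ ≠ -1 := by linarith
  have hu2 : u₂ ≠ -1 := by linarith
  have hT2lb : x 0 - t + u₂ ≤ T t x u₂ := by
    unfold T
    rw [if_neg hu2]
    split_ifs with h1 h2 h3
    · have e : u₂ = t := le_antisymm h2t h1
      subst e
      simp
    · linarith
    · linarith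
    · linarith
  have hT2ub : T t x u₂ ≤ x 0 + t - u₂ := by
    unfold T
    rw [if_neg hu2]
    split_ifs with h1 h2 h3
    · have e : u₂ = t := le_antisymm h2t h1
      subst e
      simp
    · linarith
    · linarith
    · linarith
  rcases abs_le.mp h with ⟨ha, hb⟩
  unfold T
  rw [if_neg hu1]
  split_ifs with h1 h2 h3
  · have e : u₁ - t = 0 := by linarith
    rw [e]
    linarith
  · linarith
  · linarith
  · rfl
end
end

section
/- For every t ∈ [0,1] and x ∈ C, the function T(t)x belongs to C; that is, 0 ≤ (T(t)x)(u) ≤ 1 for all u ∈ Ω and T(t)x is 1-Lipschitz on [0,∞). -/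
open Set

noncomputable section

/-! On `[t, ∞)`, `T(t)x` is a translate of `x`. On `[0, t]` it is the projection of
`1 - α_x(1 - t + u)` onto `[x(0) - (t - u), x(0) + (t - u)]`, a `max`/`min` of 1-Lipschitz
functions: `α_x` is 1-Lipschitz because a value `x(s)` with `r₁ ≤ s < r₂` exceeds `x(r₂)` by at
most `r₂ - r₁`. The projection equals `x(0)` at `u = t`, so the two 1-Lipschitz pieces glue.
The bounds `0 ≤ T(t)x ≤ 1` come from `x(0), α_x ∈ [0, 1]`. -/

lemma lipschitzOnWith_one_iff_abs_sub_le {f : ℝ → ℝ} {s : Set ℝ} :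
    LipschitzOnWith 1 f s ↔ ∀ a ∈ s, ∀ b ∈ s, |f a - f b| ≤ |a - b| := by
  simp only [lipschitzOnWith_iff_dist_le_mul, NNReal.coe_one, one_mul, Real.dist_eq]

namespace LipschitzOnWith

variable {α β : Type*} {K : NNReal} {s : Set α}

protected lemma congr [PseudoEMetricSpace α] [PseudoEMetricSpace β] {f g : α → β}
    (hf : LipschitzOnWith K f s) (h : EqOn f g s) : LipschitzOnWith K g s := by
  intro a ha b hb
  rw [← h ha, ← h hb]
  exact hf ha hb

variable [PseudoEMetricSpace α] {Kf Kg : NNReal} {f g : α → ℝ}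

protected lemma max (hf : LipschitzOnWith Kf f s) (hg : LipschitzOnWith Kg g s) :
    LipschitzOnWith (max Kf Kg) (fun a => max (f a) (g a)) s := by
  simpa only [one_mul, Function.comp_def] using
    lipschitzWith_max.comp_lipschitzOnWith (hf.prodMk hg)

protected lemma min (hf : LipschitzOnWith Kf f s) (hg : LipschitzOnWith Kg g s) :
    LipschitzOnWith (max Kf Kg) (fun a => min (f a) (g a)) s := by
  simpa only [one_mul, Function.comp_def] using
    lipschitzWith_min.comp_lipschitzOnWith (hf.prodMk hg)

end LipschitzOnWith

lemma LipschitzOnWith.Ici_of_Icc_of_Ici {β : Type*} [PseudoMetricSpace β] {K : NNReal}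
    {f : ℝ → β} {a b : ℝ} (h₁ : LipschitzOnWith K f (Icc a b))
    (h₂ : LipschitzOnWith K f (Ici b)) : LipschitzOnWith K f (Ici a) := by
  rcases lt_or_ge b a with hba | hab
  · exact h₂.mono (Ici_subset_Ici.2 hba.le)
  rw [lipschitzOnWith_iff_dist_le_mul] at h₁ h₂ ⊢
  intro u hu v hv
  wlog huv : u ≤ v generalizing u v
  · rw [dist_comm, dist_comm u]
    exact this v hv u hu (le_of_not_ge huv)
  rcases le_total v b with hvb | hbv
  · exact h₁ u ⟨hu, huv.trans hvb⟩ v ⟨hu.trans huv, hvb⟩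
  rcases le_total b u with hbu | hub
  · exact h₂ u hbu v hbv
  calc dist (f u) (f v) ≤ dist (f u) (f b) + dist (f b) (f v) := dist_triangle _ _ _
    _ ≤ K * dist u b + K * dist b v :=
      add_le_add (h₁ u ⟨hu, hub⟩ b ⟨hab, le_rfl⟩) (h₂ b self_mem_Ici v hbv)
    _ = K * dist u v := by
      simp only [Real.dist_eq, abs_of_nonpos (sub_nonpos.2 hub), abs_of_nonpos (sub_nonpos.2 hbv),
        abs_of_nonpos (sub_nonpos.2 huv)]
      ring

section

variable {t : ℝ} {x : ℝ → ℝ}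

lemma memC.lipschitzOnWith (hx : memC x) : LipschitzOnWith 1 x (Ici 0) :=
  lipschitzOnWith_one_iff_abs_sub_le.2 hx.2

lemma singleton_union_Ici_subset_Omega {r : ℝ} (hr : 0 ≤ r) :
    ({-1} ∪ Ici r : Set ℝ) ⊆ Omega :=
  union_subset_union_right _ (Ici_subset_Ici.2 hr)

lemma bddAbove_image_singleton_union_Ici (hx : memC x) {r : ℝ} (hr : 0 ≤ r) :
    BddAbove (x '' ({-1} ∪ Ici r)) :=
  ⟨1, forall_mem_image.2 fun s hs => (hx.1 s (singleton_union_Ici_subset_Omega hr hs)).2⟩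

lemma alphaF_mem_Icc (hx : memC x) {r : ℝ} (hr : 0 ≤ r) : alphaF x r ∈ Icc 0 1 := by
  have hne : (x '' ({-1} ∪ Ici r)).Nonempty := ⟨x (-1), mem_image_of_mem x (Or.inl rfl)⟩
  refine ⟨(hx.1 (-1) (Or.inl rfl)).1.trans ?_, csSup_le hne ?_⟩
  · exact le_csSup (bddAbove_image_singleton_union_Ici hx hr) (mem_image_of_mem x (Or.inl rfl))
  · exact forall_mem_image.2 fun s hs => (hx.1 s (singleton_union_Ici_subset_Omega hr hs)).2

lemma alphaF_antitoneOn (hx : memC x) : AntitoneOn (alphaF x) (Ici 0) := fun _ h₁ _ _ h =>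
  csSup_le_csSup (bddAbove_image_singleton_union_Ici hx h₁)
    ⟨x (-1), mem_image_of_mem x (Or.inl rfl)⟩
    (image_mono (union_subset_union_right _ (Ici_subset_Ici.2 h)))

lemma alphaF_le_add_sub (hx : memC x) {r₁ r₂ : ℝ} (h₀ : 0 ≤ r₁) (h : r₁ ≤ r₂) :
    alphaF x r₁ ≤ alphaF x r₂ + (r₂ - r₁) := by
  have hbdd := bddAbove_image_singleton_union_Ici hx (h₀.trans h)
  have hle : ∀ s ∈ ({-1} ∪ Ici r₂ : Set ℝ), x s ≤ alphaF x r₂ := fun s hs =>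
    le_csSup hbdd (mem_image_of_mem x hs)
  refine csSup_le ⟨x (-1), mem_image_of_mem x (Or.inl rfl)⟩ (forall_mem_image.2 ?_)
  rintro s (hs | hs)
  · linarith [hle s (Or.inl hs)]
  rcases le_or_gt r₂ s with hs₂ | hs₂
  · linarith [hle s (Or.inr hs₂)]
  have hlip : x s - x r₂ ≤ |s - r₂| :=
    (le_abs_self _).trans (hx.2 s (h₀.trans hs) r₂ (h₀.trans h))
  rw [abs_of_neg (sub_neg.2 hs₂)] at hlip
  linarith [hle r₂ (Or.inr self_mem_Ici), mem_Ici.1 hs]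

lemma lipschitzOnWith_alphaF (hx : memC x) : LipschitzOnWith 1 (alphaF x) (Ici 0) := by
  refine LipschitzOnWith.of_le_add fun r₁ h₁ r₂ h₂ => ?_
  rw [Real.dist_eq]
  rcases le_total r₁ r₂ with h | h
  · linarith [alphaF_le_add_sub hx h₁ h, neg_abs_le (r₁ - r₂)]
  · linarith [alphaF_antitoneOn hx h₂ h₁ h, abs_nonneg (r₁ - r₂)]

/-- The three-case formula of `T(t)x` on `[0, t]`, written as the clamp of `1 - α_x(1 - t + u)`
to `[x(0) - t + u, x(0) + t - u]`. -/
def boundaryProfile (t : ℝ) (x : ℝ → ℝ) (u : ℝ) : ℝ :=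
  max (x 0 - t + u) (min (x 0 + t - u) (1 - alphaF x (1 - t + u)))

lemma boundaryProfile_mem_Icc (hx : memC x) (ht : t ≤ 1) {u : ℝ} (hu : 0 ≤ u) (hut : u ≤ t) :
    boundaryProfile t x u ∈ Icc 0 1 := by
  have hα := alphaF_mem_Icc hx (by linarith : 0 ≤ 1 - t + u)
  have hx₀ := hx.1 0 (Or.inr self_mem_Ici)
  exact ⟨le_max_of_le_right (le_min (by linarith [hx₀.1]) (by linarith [hα.2])),
    max_le (by linarith [hx₀.2]) ((min_le_right _ _).trans (by linarith [hα.1]))⟩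

lemma lipschitzOnWith_boundaryProfile (hx : memC x) :
    LipschitzOnWith 1 (boundaryProfile t x) (Ici (t - 1)) := by
  have hα : LipschitzOnWith 1 (fun u => alphaF x (1 - t + u)) (Ici (t - 1)) := by
    simpa only [one_mul, Function.comp_def, IsometryEquiv.addLeft_apply] using
      (lipschitzOnWith_alphaF hx).comp
        (IsometryEquiv.addLeft (1 - t)).isometry.lipschitz.lipschitzOnWith
        (s := Ici (t - 1)) fun u hu => show 0 ≤ 1 - t + u by linarith [mem_Ici.1 hu]
  have hA : LipschitzOnWith 1 (fun u => 1 - alphaF x (1 - t + u)) (Ici (t - 1)) := by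
    simpa only [one_mul, Function.comp_def, IsometryEquiv.subLeft_apply] using
      (IsometryEquiv.subLeft (1 : ℝ)).isometry.lipschitz.comp_lipschitzOnWith hα
  unfold boundaryProfile
  simpa only [max_self, IsometryEquiv.addLeft_apply, IsometryEquiv.subLeft_apply] using
    (IsometryEquiv.addLeft (x 0 - t)).isometry.lipschitz.lipschitzOnWith.max
      ((IsometryEquiv.subLeft (x 0 + t)).isometry.lipschitz.lipschitzOnWith.min hA)

lemma T_neg_one : T t x (-1) = x (-1) := if_pos rfl

lemma T_of_le {u : ℝ} (hu : 0 ≤ u) (htu : t ≤ u) : T t x u = x (u - t) := by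
  rw [T, if_neg (by linarith), if_pos htu]

lemma T_eq_boundaryProfile {u : ℝ} (hu : 0 ≤ u) (hut : u ≤ t) :
    T t x u = boundaryProfile t x u := by
  rcases hut.eq_or_lt with rfl | hut
  · simp [T_of_le hu le_rfl, boundaryProfile]
  rw [T, if_neg (by linarith), if_neg (not_le.2 hut), boundaryProfile]
  split_ifs with h₁ h₂ <;> grind

lemma mapsTo_T (hx : memC x) (ht : t ≤ 1) : MapsTo (T t x) Omega (Icc 0 1) := by
  rintro u (rfl | hu)
  · rw [T_neg_one]
    exact hx.1 (-1) (Or.inl rfl)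
  rcases le_total t u with htu | hut
  · rw [T_of_le hu htu]
    exact hx.1 (u - t) (Or.inr (sub_nonneg.2 htu))
  · rw [T_eq_boundaryProfile hu hut]
    exact boundaryProfile_mem_Icc hx ht hu hut

lemma lipschitzOnWith_T (hx : memC x) (ht : t ∈ Icc 0 1) :
    LipschitzOnWith 1 (T t x) (Ici 0) := by
  have hprofile : LipschitzOnWith 1 (boundaryProfile t x) (Icc 0 t) :=
    (lipschitzOnWith_boundaryProfile hx).mono fun u hu => show t - 1 ≤ u by linarith [ht.2, hu.1]
  have hshift : LipschitzOnWith 1 (fun u => x (u - t)) (Ici t) := by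
    simpa only [one_mul, Function.comp_def, IsometryEquiv.subRight_apply] using
      hx.lipschitzOnWith.comp (IsometryEquiv.subRight t).isometry.lipschitz.lipschitzOnWith
        (s := Ici t) fun u hu => sub_nonneg.2 (mem_Ici.1 hu)
  exact LipschitzOnWith.Ici_of_Icc_of_Ici
    (hprofile.congr fun u hu => (T_eq_boundaryProfile hu.1 hu.2).symm)
    (hshift.congr fun u hu => (T_of_le (ht.1.trans hu) hu).symm)

end

/-- for `t ∈ [0,1]` and `x ∈ C`, `T(t)x ∈ C`. -/
theorem stmt_7 (t : ℝ) (ht : t ∈ Set.Icc (0:ℝ) 1) (x : ℝ → ℝ) (hx : memC x) :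
    memC (T t x) :=
  ⟨mapsTo_T hx ht.2, lipschitzOnWith_one_iff_abs_sub_le.1 (lipschitzOnWith_T hx ht)⟩
end
end

section
/- For every t ∈ [0,1] and x, y ∈ C, T(t) is an isometry: ‖T(t)x − T(t)y‖ = ‖x − y‖. -/
open Set

noncomputable section

lemma omega_neg_one : (-1:ℝ) ∈ Omega := Or.inl rfl

lemma omega_of_nonneg {u : ℝ} (hu : 0 ≤ u) : u ∈ Omega := Or.inr hu

lemma omega_nonempty : Omega.Nonempty := ⟨-1, omega_neg_one⟩

lemma subset_omega {r : ℝ} (hr : 0 ≤ r) : ({-1} ∪ Set.Ici r : Set ℝ) ⊆ Omega := by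
  rintro s (hs | hs)
  · exact Or.inl hs
  · exact Or.inr (le_trans hr hs)

lemma absdiff_le_one {x y : ℝ → ℝ} (hx : memC x) (hy : memC y) {u : ℝ} (hu : u ∈ Omega) :
    |x u - y u| ≤ 1 := by
  have h1 := hx.1 u hu
  have h2 := hy.1 u hu
  rw [abs_le]
  constructor <;> [linarith [h1.1, h2.2]; linarith [h1.2, h2.1]]

lemma bddAbove_dist {x y : ℝ → ℝ} (hx : memC x) (hy : memC y) :
    BddAbove ((fun u => |x u - y u|) '' Omega) := by
  refine ⟨1, ?_⟩
  rintro _ ⟨u, hu, rfl⟩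
  exact absdiff_le_one hx hy hu

lemma le_supDist {x y : ℝ → ℝ} (hx : memC x) (hy : memC y) {u : ℝ} (hu : u ∈ Omega) :
    |x u - y u| ≤ supDist x y :=
  le_csSup (bddAbove_dist hx hy) (mem_image_of_mem _ hu)

lemma alphaF_mem {x : ℝ → ℝ} (hx : memC x) {r : ℝ} (hr : 0 ≤ r) :
    alphaF x r ∈ Set.Icc (0:ℝ) 1 := by
  have hbdd : BddAbove (x '' ({-1} ∪ Set.Ici r)) := by
    refine ⟨1, ?_⟩
    rintro _ ⟨s, hs, rfl⟩
    exact (hx.1 s (subset_omega hr hs)).2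
  constructor
  · have h1 : x (-1) ≤ alphaF x r := le_csSup hbdd (mem_image_of_mem _ (Or.inl rfl))
    have h2 := (hx.1 (-1) omega_neg_one).1
    linarith
  · apply csSup_le ⟨x (-1), mem_image_of_mem _ (Or.inl rfl)⟩
    rintro _ ⟨s, hs, rfl⟩
    exact (hx.1 s (subset_omega hr hs)).2

lemma alphaF_le_add {x y : ℝ → ℝ} (hx : memC x) (hy : memC y) {r : ℝ} (hr : 0 ≤ r) :
    alphaF x r ≤ alphaF y r + supDist x y := by
  apply csSup_le ⟨x (-1), mem_image_of_mem _ (Or.inl rfl)⟩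
  rintro _ ⟨s, hs, rfl⟩
  have hsΩ : s ∈ Omega := subset_omega hr hs
  have h1 : x s - y s ≤ supDist x y :=
    le_trans (le_abs_self _) (le_supDist hx hy hsΩ)
  have hbdd : BddAbove (y '' ({-1} ∪ Set.Ici r)) := by
    refine ⟨1, ?_⟩
    rintro _ ⟨s', hs', rfl⟩
    exact (hy.1 s' (subset_omega hr hs')).2
  have h2 : y s ≤ alphaF y r := le_csSup hbdd (mem_image_of_mem _ hs)
  linarith

lemma abs_alphaF_sub {x y : ℝ → ℝ} (hx : memC x) (hy : memC y) {r : ℝ} (hr : 0 ≤ r) :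
    |alphaF x r - alphaF y r| ≤ supDist x y := by
  rw [abs_sub_le_iff]
  have hd : supDist y x = supDist x y := by
    unfold supDist
    congr 1
    ext v
    simp only [mem_image]
    constructor <;> rintro ⟨u, hu, rfl⟩ <;> exact ⟨u, hu, (abs_sub_comm _ _)⟩
  constructor
  · linarith [alphaF_le_add hx hy hr]
  · have := alphaF_le_add hy hx hr
    linarith

lemma T_eq_clamp {t : ℝ} (x : ℝ → ℝ) {u : ℝ} (hu : 0 ≤ u) (hut : u < t) :
    T t x u = max (x 0 - t + u) (min (x 0 + t - u) (1 - alphaF x (1 - t + u))) := by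
  have hne : u ≠ -1 := by linarith
  have hnt : ¬ t ≤ u := not_le.mpr hut
  set A := 1 - alphaF x (1 - t + u) with hA
  have hab : x 0 - t + u ≤ x 0 + t - u := by linarith
  simp only [T, if_neg hne, if_neg hnt]
  split_ifs with h1 h2
  · -- A ≤ a
    rw [max_eq_left]
    exact le_trans (min_le_right _ _) h1
  · -- b ≤ A
    rw [min_eq_left h2, max_eq_right hab]
  · -- a < A < b
    rw [min_eq_right (le_of_not_ge h2), max_eq_right (le_of_not_ge h1)]

lemma T_mem {t : ℝ} (ht : t ∈ Set.Icc (0:ℝ) 1) {x : ℝ → ℝ} (hx : memC x)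
    {u : ℝ} (hu : u ∈ Omega) : T t x u ∈ Set.Icc (0:ℝ) 1 := by
  rcases hu with hu | hu
  · rw [mem_singleton_iff] at hu
    subst hu
    simp only [T, if_pos rfl]
    exact hx.1 (-1) omega_neg_one
  · have hu0 : (0:ℝ) ≤ u := hu
    rcases le_or_gt t u with h | h
    · have hne : u ≠ -1 := by
        intro hc; rw [hc] at hu0; norm_num at hu0
      simp only [T, if_neg hne, if_pos h]
      exact hx.1 (u - t) (omega_of_nonneg (by linarith))
    · rw [T_eq_clamp x hu0 h]
      have hr : (0:ℝ) ≤ 1 - t + u := by linarith [ht.2]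
      have hα := alphaF_mem hx hr
      have hx0 := hx.1 0 (omega_of_nonneg le_rfl)
      constructor
      · have h1 : (0:ℝ) ≤ min (x 0 + t - u) (1 - alphaF x (1 - t + u)) := by
          apply le_min <;> [linarith [hx0.1]; linarith [hα.2]]
        exact le_trans h1 (le_max_right _ _)
      · apply max_le
        · linarith [hx0.2]
        · exact le_trans (min_le_right _ _) (by linarith [hα.1])

lemma memC_T {t : ℝ} (ht : t ∈ Set.Icc (0:ℝ) 1) {x : ℝ → ℝ} (hx : memC x) :
    ∀ u ∈ Omega, T t x u ∈ Set.Icc (0:ℝ) 1 := fun u hu => T_mem ht hx hu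

/-- for `t ∈ [0,1]`, `T(t)` is an isometry on `C` for the sup norm
over `Ω`: `‖T(t)x − T(t)y‖ = ‖x − y‖`. -/
theorem stmt_8 (t : ℝ) (ht : t ∈ Set.Icc (0:ℝ) 1)
    (x y : ℝ → ℝ) (hx : memC x) (hy : memC y) :
    supDist (T t x) (T t y) = supDist x y := by
  -- bddAbove for the T-image
  have hbddT : BddAbove ((fun u => |T t x u - T t y u|) '' Omega) := by
    refine ⟨1, ?_⟩
    rintro _ ⟨u, hu, rfl⟩
    have h1 := T_mem ht hx hu
    have h2 := T_mem ht hy hu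
    rw [abs_le]
    constructor <;> [linarith [h1.1, h2.2]; linarith [h1.2, h2.1]]
  apply le_antisymm
  · -- sup |Tx - Ty| ≤ sup |x - y|
    apply csSup_le ⟨_, mem_image_of_mem _ omega_neg_one⟩
    rintro _ ⟨u, hu, rfl⟩
    rcases hu with hu | hu
    · rw [mem_singleton_iff] at hu
      subst hu
      simp only [T, if_pos rfl]
      exact le_supDist hx hy omega_neg_one
    · have hu0 : (0:ℝ) ≤ u := hu
      show |T t x u - T t y u| ≤ supDist x y
      rcases le_or_gt t u with h | h
      · have hne : u ≠ -1 := by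
          intro hc; rw [hc] at hu0; norm_num at hu0
        simp only [T, if_neg hne, if_pos h]
        exact le_supDist hx hy (omega_of_nonneg (by linarith [ht.1]))
      · rw [T_eq_clamp x hu0 h, T_eq_clamp y hu0 h]
        have hr : (0:ℝ) ≤ 1 - t + u := by linarith [ht.2]
        have hd0 : |x 0 - y 0| ≤ supDist x y :=
          le_supDist hx hy (omega_of_nonneg le_rfl)
        have hdα : |alphaF x (1 - t + u) - alphaF y (1 - t + u)| ≤ supDist x y :=
          abs_alphaF_sub hx hy hr
        have key := abs_max_sub_max_le_max (x 0 - t + u) (min (x 0 + t - u) (1 - alphaF x (1 - t + u)))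
          (y 0 - t + u) (min (y 0 + t - u) (1 - alphaF y (1 - t + u)))
        have key2 := abs_min_sub_min_le_max (x 0 + t - u) (1 - alphaF x (1 - t + u))
          (y 0 + t - u) (1 - alphaF y (1 - t + u))
        have e1 : |x 0 - t + u - (y 0 - t + u)| = |x 0 - y 0| := by ring_nf
        have e2 : |x 0 + t - u - (y 0 + t - u)| = |x 0 - y 0| := by ring_nf
        have e3 : |1 - alphaF x (1 - t + u) - (1 - alphaF y (1 - t + u))| =
            |alphaF x (1 - t + u) - alphaF y (1 - t + u)| := by
          rw [abs_sub_comm]; ring_nf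
        rw [e1] at key
        rw [e2, e3] at key2
        calc _ ≤ _ := key
        _ ≤ supDist x y := by
            apply max_le hd0
            exact le_trans key2 (max_le hd0 hdα)
  · -- sup |x - y| ≤ sup |Tx - Ty|
    apply csSup_le ⟨_, mem_image_of_mem _ omega_neg_one⟩
    rintro _ ⟨u, hu, rfl⟩
    rcases hu with hu | hu
    · rw [mem_singleton_iff] at hu
      subst hu
      show |x (-1) - y (-1)| ≤ supDist (T t x) (T t y)
      have heq : |x (-1) - y (-1)| = |T t x (-1) - T t y (-1)| := by
        simp [T]
      rw [heq]
      exact le_csSup hbddT (mem_image_of_mem _ omega_neg_one)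
    · have hu0 : (0:ℝ) ≤ u := hu
      show |x u - y u| ≤ supDist (T t x) (T t y)
      have hmem : u + t ∈ Omega := omega_of_nonneg (by linarith [ht.1])
      have hne : u + t ≠ -1 := by
        intro hc
        linarith [ht.1]
      have hge : t ≤ u + t := by linarith
      have heq : |x u - y u| = |T t x (u + t) - T t y (u + t)| := by
        simp only [T, if_neg hne, if_pos hge]
        norm_num
      rw [heq]
      exact le_csSup hbddT (mem_image_of_mem _ hmem)
end
end

section
/- For every s ∈ [0,1/2], the function v_s defined by v_s(−1) = 1−s and v_s(u) = s for u ∈ [0,∞) is a fixed point of T(t) for every t ∈ [0,1]. -/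
open Set

noncomputable section

/-- `v_s(−1) = 1−s`, `v_s(u) = s` for `u ≥ 0`. -/
def vFun (s : ℝ) : ℝ → ℝ := fun u => if u = -1 then 1 - s else s

lemma vFun_image (s r : ℝ) (hr : r ≠ -1) :
    vFun s '' ({-1} ∪ Set.Ici r) = {1 - s, s} := by
  ext y
  constructor
  · rintro ⟨z, hz, rfl⟩
    rcases hz with hz | hz
    · simp at hz; simp [vFun, hz]
    · by_cases h : z = -1 <;> simp [vFun, h]
  · rintro (rfl | rfl)
    · exact ⟨-1, Or.inl rfl, by simp [vFun]⟩
    · exact ⟨r, Or.inr Set.self_mem_Ici, by simp [vFun, hr]⟩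

lemma alpha_vFun (s r : ℝ) (hr : r ≠ -1) (hs : s ≤ 1/2) :
    alphaF (vFun s) r = 1 - s := by
  rw [alphaF, vFun_image s r hr, csSup_pair]
  exact max_eq_left (by linarith)

/-- for every `s ∈ [0,1/2]`, `v_s` is a fixed point of `T(t)`
for every `t ∈ [0,1]` (as functions on `Ω`). -/
theorem stmt_11 (s : ℝ) (hs : s ∈ Set.Icc (0:ℝ) (1/2)) (t : ℝ) (ht : t ∈ Set.Icc (0:ℝ) 1) :
    ∀ u ∈ Omega, T t (vFun s) u = vFun s u := by
  rintro u (hu | hu)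
  · simp at hu
    simp [T, hu]
  · simp only [Set.mem_Ici] at hu
    have hune : u ≠ -1 := by intro h; rw [h] at hu; linarith
    by_cases htu : t ≤ u
    · have : u - t ≠ -1 := by intro h; nlinarith [ht.1]
      simp [T, hune, htu, vFun, this]
    · have hr : (1 : ℝ) - t + u ≠ -1 := by intro h; nlinarith [ht.2]
      have ha := alpha_vFun s (1 - t + u) hr hs.2
      have h0 : vFun s 0 = s := by norm_num [vFun]
      have hlt : u < t := lt_of_not_ge htu
      simp only [T, if_neg hune, if_neg htu, ha, h0]
      rw [if_neg (by linarith), if_neg (by linarith)]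
      simp [vFun, hune]
end
end

section
/- For every s ∈ [0,1/2], the function w_s defined by w_s(−1) = s and w_s(u) = 1/2 for u ∈ [0,∞) is a fixed point of T(t) for every t ∈ [0,1]. -/
open Set

noncomputable section

/-- `w_s(−1) = s`, `w_s(u) = 1/2` for `u ≥ 0`. -/
def wFun (s : ℝ) : ℝ → ℝ := fun u => if u = -1 then s else 1/2

theorem T_apply_neg_one (t : ℝ) (x : ℝ → ℝ) : T t x (-1) = x (-1) := if_pos rfl

theorem T_apply_of_le {t u : ℝ} (x : ℝ → ℝ) (hu : u ≠ -1) (htu : t ≤ u) :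
    T t x u = x (u - t) := by
  simp only [T, if_neg hu, if_pos htu]

theorem T_apply_of_lt {t u : ℝ} {x : ℝ → ℝ} (hu : u ≠ -1) (hut : u < t)
    (hα : 1 - alphaF x (1 - t + u) = x 0) : T t x u = x 0 := by
  have hlow : ¬ 1 - alphaF x (1 - t + u) ≤ x 0 - t + u := by linarith
  have hhigh : ¬ x 0 + t - u ≤ 1 - alphaF x (1 - t + u) := by linarith
  rw [T, if_neg hu, if_neg hut.not_ge, if_neg hlow, if_neg hhigh, hα]

theorem wFun_of_ne {s u : ℝ} (hu : u ≠ -1) : wFun s u = 1 / 2 := if_neg hu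

theorem wFun_of_nonneg {s u : ℝ} (hu : 0 ≤ u) : wFun s u = 1 / 2 :=
  wFun_of_ne (by linarith)

theorem image_wFun (s r : ℝ) : wFun s '' ({-1} ∪ Ici r) = {s, 1 / 2} := by
  apply Subset.antisymm
  · rintro _ ⟨u, -, rfl⟩
    by_cases hu : u = -1
    · simp [wFun, hu]
    · simp [wFun_of_ne hu]
  · rintro y (rfl | rfl)
    · exact ⟨-1, Or.inl rfl, if_pos rfl⟩
    · exact ⟨max r 0, Or.inr (le_max_left r 0), wFun_of_nonneg (le_max_right r 0)⟩

theorem alphaF_wFun (s r : ℝ) : alphaF (wFun s) r = max s (1 / 2) := by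
  rw [alphaF, image_wFun, csSup_pair]

theorem stmt_12_general (s : ℝ) (hs : s ∈ Set.Icc (0:ℝ) (1/2)) (t : ℝ) :
    ∀ u ∈ Omega, T t (wFun s) u = wFun s u := by
  rintro u (rfl | hu)
  · exact T_apply_neg_one t (wFun s)
  have hu1 : u ≠ -1 := by linarith [mem_Ici.mp hu]
  rw [wFun_of_ne hu1]
  by_cases htu : t ≤ u
  · rw [T_apply_of_le _ hu1 htu, wFun_of_nonneg (sub_nonneg.mpr htu)]
  · have hα : 1 - alphaF (wFun s) (1 - t + u) = wFun s 0 := by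
      rw [alphaF_wFun, max_eq_right hs.2, wFun_of_nonneg le_rfl]
      norm_num
    rw [T_apply_of_lt hu1 (not_le.mp htu) hα, wFun_of_nonneg le_rfl]

/-- for every `s ∈ [0,1/2]`, `w_s` is a fixed point of `T(t)`
for every `t ∈ [0,1]` (as functions on `Ω`). -/
theorem stmt_12 (s : ℝ) (hs : s ∈ Set.Icc (0:ℝ) (1/2)) (t : ℝ) (ht : t ∈ Set.Icc (0:ℝ) 1) :
    ∀ u ∈ Omega, T t (wFun s) u = wFun s u :=
  stmt_12_general s hs t
end
end

section
/- If x ∈ C satisfies T(t)x = x for all t ∈ [0,1], then x is constant on [0,∞), with constant value s = x(0) satisfying s ≤ 1/2 and x(−1) ≤ 1 − s; moreover either s = 1/2 (so x = w_{x(−1)}) or s < 1/2 and x(−1) = 1 − s (so x = v_s). Hence the common fixed point set of {T(t)} equals { v_s : s ∈ [0,1/2] } ∪ { w_s : s ∈ [0,1/2] }. -/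
open Set

noncomputable section

lemma alpha_eq (y : ℝ → ℝ) (a c : ℝ) (h1 : y (-1) = a) (hc : ∀ u ≥ (0:ℝ), y u = c)
    (r : ℝ) (hr : 0 ≤ r) : alphaF y r = max a c := by
  have himg : y '' ({-1} ∪ Set.Ici r) = {a, c} := by
    apply Set.Subset.antisymm
    · rintro z ⟨u, hu | hu, rfl⟩
      · simp only [Set.mem_singleton_iff] at hu; subst hu
        simp [h1]
      · simp only [Set.mem_Ici] at hu
        right; exact hc u (le_trans hr hu)
    · intro z hz
      simp only [Set.mem_insert_iff, Set.mem_singleton_iff] at hz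
      rcases hz with rfl | rfl
      · exact ⟨-1, Or.inl rfl, h1⟩
      · exact ⟨r, Or.inr Set.self_mem_Ici, hc r hr⟩
  rw [alphaF, himg, csSup_pair]

lemma fixed_shape (y : ℝ → ℝ) (hconst : ∀ u ≥ (0:ℝ), y u = y 0)
    (hmax : max (y (-1)) (y 0) = 1 - y 0) :
    ∀ t ∈ Set.Icc (0:ℝ) 1, ∀ u ∈ Omega, T t y u = y u := by
  rintro t ⟨ht0, ht1⟩ u hu
  rcases hu with hu | hu
  · simp only [Set.mem_singleton_iff] at hu; subst hu
    simp [T]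
  · simp only [Set.mem_Ici] at hu
    have hne : u ≠ -1 := by intro h; rw [h] at hu; linarith
    simp only [T, if_neg hne]
    by_cases htu : t ≤ u
    · rw [if_pos htu, hconst (u - t) (by linarith), hconst u hu]
    · push_neg at htu
      rw [if_neg (not_le.mpr htu)]
      have halpha := alpha_eq y (y (-1)) (y 0) rfl hconst (1 - t + u) (by linarith)
      rw [halpha, hmax]
      rw [if_neg (by linarith), if_neg (by linarith), hconst u hu]
      ring

lemma main_part (x : ℝ → ℝ) (hx : memC x)
    (hfix : ∀ t ∈ Set.Icc (0:ℝ) 1, ∀ u ∈ Omega, T t x u = x u) :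
    (∀ u ≥ (0:ℝ), x u = x 0) ∧ x 0 ≤ 1/2 ∧ x (-1) ≤ 1 - x 0 ∧
      ((x 0 = 1/2 ∧ Set.EqOn x (wFun (x (-1))) Omega) ∨
        (x 0 < 1/2 ∧ x (-1) = 1 - x 0 ∧ Set.EqOn x (vFun (x 0)) Omega)) := by
  have hstep : ∀ u ≥ (0:ℝ), ∀ t, 0 ≤ t → t ≤ 1 → t ≤ u → x (u - t) = x u := by
    intro u hu t ht0 ht1 htu
    have h := hfix t ⟨ht0, ht1⟩ u (Or.inr hu)
    have hne : u ≠ -1 := by intro h'; rw [h'] at hu; linarith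
    simp only [T, if_neg hne, if_pos htu] at h
    exact h
  have hconst : ∀ u ≥ (0:ℝ), x u = x 0 := by
    have key : ∀ n : ℕ, ∀ u : ℝ, 0 ≤ u → u ≤ n → x u = x 0 := by
      intro n
      induction n with
      | zero =>
        intro u h0 h1
        have : u = 0 := le_antisymm (by exact_mod_cast h1) h0
        rw [this]
      | succ n ih =>
        intro u h0 h1
        by_cases h : u ≤ 1
        · have h2 := hstep u h0 u h0 h le_rfl
          rw [sub_self] at h2
          exact h2.symm
        · push_neg at h
          have h2 := hstep u h0 1 zero_le_one le_rfl (le_of_lt h)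
          rw [← h2]
          exact ih (u - 1) (by linarith) (by push_cast at h1 ⊢; linarith)
    intro u hu
    obtain ⟨n, hn⟩ := exists_nat_ge u
    exact key n u hu hn
  have halpha := alpha_eq x (x (-1)) (x 0) rfl hconst 0 le_rfl
  have hmax : max (x (-1)) (x 0) = 1 - x 0 := by
    have h := hfix 1 ⟨zero_le_one, le_rfl⟩ 0 (Or.inr Set.self_mem_Ici)
    have hne : (0:ℝ) ≠ -1 := by norm_num
    simp only [T, if_neg hne, if_neg (by norm_num : ¬ (1:ℝ) ≤ 0)] at h
    have hr : (1:ℝ) - 1 + 0 = 0 := by norm_num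
    rw [hr, halpha] at h
    split_ifs at h with h1 h2
    · linarith
    · linarith
    · linarith
  have hb0 := hx.1 0 (Or.inr Set.self_mem_Ici)
  have hhalf : x 0 ≤ 1/2 := by
    have := le_max_right (x (-1)) (x 0)
    rw [hmax] at this; linarith
  have hneg : x (-1) ≤ 1 - x 0 := by
    have := le_max_left (x (-1)) (x 0)
    rw [hmax] at this; linarith
  refine ⟨hconst, hhalf, hneg, ?_⟩
  by_cases hs : x 0 = 1/2
  · left
    refine ⟨hs, ?_⟩
    intro u hu
    rcases hu with hu | hu
    · simp only [Set.mem_singleton_iff] at hu; subst hu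
      simp [wFun]
    · simp only [Set.mem_Ici] at hu
      have hne : u ≠ -1 := by intro h'; rw [h'] at hu; linarith
      rw [wFun]
      simp only [if_neg hne]
      rw [hconst u hu, hs]
  · right
    have hs' : x 0 < 1/2 := lt_of_le_of_ne hhalf hs
    have hxm : x (-1) = 1 - x 0 := by
      rcases max_cases (x (-1)) (x 0) with ⟨he, _⟩ | ⟨he, _⟩ <;> rw [he] at hmax <;> linarith
    refine ⟨hs', hxm, ?_⟩
    intro u hu
    rcases hu with hu | hu
    · simp only [Set.mem_singleton_iff] at hu; subst hu
      simp [vFun, hxm]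
    · simp only [Set.mem_Ici] at hu
      have hne : u ≠ -1 := by intro h'; rw [h'] at hu; linarith
      rw [vFun]
      simp only [if_neg hne]
      exact hconst u hu

/-- if `x ∈ C` is a common fixed point of `{T(t) : t ∈ [0,1]}`, then
`x` is constant `s = x(0)` on `[0,∞)` with `s ≤ 1/2` and `x(−1) ≤ 1 − s`, and either
`s = 1/2` (so `x = w_{x(−1)}`) or `s < 1/2` and `x(−1) = 1 − s` (so `x = v_s`).
Hence the common fixed point set equals `{v_s : s ∈ [0,1/2]} ∪ {w_s : s ∈ [0,1/2]}`. -/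
theorem stmt_13 (x : ℝ → ℝ) (hx : memC x)
    (hfix : ∀ t ∈ Set.Icc (0:ℝ) 1, ∀ u ∈ Omega, T t x u = x u) :
    ((∀ u ≥ (0:ℝ), x u = x 0) ∧ x 0 ≤ 1/2 ∧ x (-1) ≤ 1 - x 0 ∧
      ((x 0 = 1/2 ∧ Set.EqOn x (wFun (x (-1))) Omega) ∨
        (x 0 < 1/2 ∧ x (-1) = 1 - x 0 ∧ Set.EqOn x (vFun (x 0)) Omega))) ∧
    (∀ y : ℝ → ℝ, memC y →
      ((∀ t ∈ Set.Icc (0:ℝ) 1, ∀ u ∈ Omega, T t y u = y u) ↔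
        ∃ s ∈ Set.Icc (0:ℝ) (1/2),
          Set.EqOn y (vFun s) Omega ∨ Set.EqOn y (wFun s) Omega)) := by

  refine ⟨main_part x hx hfix, ?_⟩
  intro y hy
  constructor
  · intro hyfix
    obtain ⟨hconst, hhalf, hneg, hcase⟩ := main_part y hy hyfix
    rcases hcase with ⟨h12, heq⟩ | ⟨_, _, heq⟩
    · exact ⟨y (-1), ⟨(hy.1 (-1) (Or.inl rfl)).1, by linarith⟩, Or.inr heq⟩
    · exact ⟨y 0, ⟨(hy.1 0 (Or.inr Set.self_mem_Ici)).1, hhalf⟩, Or.inl heq⟩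
  · rintro ⟨s, ⟨hs0, hs2⟩, heq | heq⟩
    · have h1 : y (-1) = 1 - s := by
        have := heq (Or.inl rfl)
        simpa [vFun] using this
      have h0 : ∀ u ≥ (0:ℝ), y u = s := by
        intro u hu
        have hne : u ≠ -1 := by intro h'; rw [h'] at hu; linarith
        have := heq (Or.inr hu)
        simpa [vFun, if_neg hne] using this
      apply fixed_shape
      · intro u hu; rw [h0 u hu, h0 0 le_rfl]
      · rw [h1, h0 0 le_rfl, max_eq_left (by linarith)]
    · have h1 : y (-1) = s := by
        have := heq (Or.inl rfl)
        simpa [wFun] using this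
      have h0 : ∀ u ≥ (0:ℝ), y u = 1/2 := by
        intro u hu
        have hne : u ≠ -1 := by intro h'; rw [h'] at hu; linarith
        have := heq (Or.inr hu)
        simpa [wFun, if_neg hne] using this
      apply fixed_shape
      · intro u hu; rw [h0 u hu, h0 0 le_rfl]
      · rw [h1, h0 0 le_rfl, max_eq_right (by linarith)]
        norm_num
end
end
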